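/- arXiv:1602.05982 — 3 statements merged into one kernel-verified Lean document; each statement's English description precedes it below -/
import Mathlib

section
/- For every integer K ≥ 2 there exist nonzero real constants c_1,…,c_{K−1}, depending only on K and with c_1 = −K(K+1)/2, such that for all (x,t) ∈ ℝ^{K−1} × ℝ the following are equivalent: (a) ∂^jγ/∂t^j(x,t) = 0 for every j = 1,…,K−1; (b) x_r = c_r·t^{r+1} for every r = 1,…,K−1. (Thus near an A_K point the closure of the set A_{K−1} is the curve parametrized by t ↦ (c_1 t^2, …, c_{K−1} t^K, t).) -/
open Finset

/-! The `(K - r)`-th derivative of `γ` in `t` involves only `x_1, …, x_r`, and `x_r` enters with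
the nonzero coefficient `(K - r)!`, so the system is triangular. With `c_r = (-1)^r r C(K+1, r+1)`
the derivative is `∑_{i ≤ r} (x_i - c_i t^{i+1}) (K-i)_{(K-r)} t^{r-i}`, where `(n)_k` is the
falling factorial: since `C(K+1,i+1) (K-i)_{(K-r)} = C(r+1,i+1) (K+1)_{(K-r)}`, the terms not
involving `x` cancel by the alternating identity `∑_{i ≤ r} (-1)^i i C(r+1,i+1) = -1`. -/

theorem forall_iff_forall_of_triangular {α : Type*} [LT α] [WellFoundedLT α]
    {D P Q : α → Prop} (h : ∀ r, D r → (∀ i < r, D i → P i) → (Q r ↔ P r)) :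
    (∀ r, D r → Q r) ↔ ∀ r, D r → P r := by
  refine ⟨fun hQ r => ?_, fun hP r hr => (h r hr fun i _ hi => hP i hi).2 (hP r hr)⟩
  induction r using WellFoundedLT.induction with
  | ind r ih => exact fun hr => (h r hr fun i hi hDi => ih i hi hDi).1 (hQ r hr)

theorem forall_mem_Icc_one_sub_one_iff (n : ℕ) (P : ℕ → Prop) :
    (∀ j ∈ Icc 1 (n - 1), P j) ↔ ∀ r ∈ Icc 1 (n - 1), P (n - r) := by
  refine ⟨fun h r hr => h _ ?_, fun h j hj => ?_⟩
  · rw [mem_Icc] at hr ⊢; omega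
  · rw [mem_Icc] at hj
    simpa [Nat.sub_sub_self (by omega : j ≤ n)] using h (n - j) (by rw [mem_Icc]; omega)

theorem sum_range_neg_one_pow_mul_choose_succ (n : ℕ) :
    ∑ i ∈ range (n + 1), (-1 : ℤ) ^ i * (n + 1).choose (i + 1) = 1 := by
  have h := Int.alternating_sum_range_choose_of_ne n.succ_ne_zero
  rw [sum_range_succ'] at h
  simp only [pow_succ, mul_neg, mul_one, neg_mul, sum_neg_distrib, pow_zero, Nat.choose_zero_right,
    Nat.cast_one] at h
  linarith

theorem sum_range_neg_one_pow_mul_mul_choose_succ {n : ℕ} (hn : n ≠ 0) :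
    ∑ i ∈ range (n + 1), (-1 : ℤ) ^ i * i * (n + 1).choose (i + 1) = -1 := by
  have hsplit : ∀ i, (-1 : ℤ) ^ i * i * (n + 1).choose (i + 1) =
      (n + 1) * ((-1) ^ i * n.choose i) - (-1) ^ i * (n + 1).choose (i + 1) := by
    intro i
    have := congrArg (Nat.cast (R := ℤ)) (Nat.add_one_mul_choose_eq n i)
    push_cast at this
    linear_combination -(-1 : ℤ) ^ i * this
  simp only [hsplit, sum_sub_distrib, ← mul_sum, Int.alternating_sum_range_choose_of_ne hn,
    sum_range_neg_one_pow_mul_choose_succ]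
  ring

theorem choose_mul_descFactorial_eq {K i r : ℕ} (hir : i ≤ r) (hrK : r ≤ K) :
    (K + 1).choose (i + 1) * (K - i).descFactorial (K - r) =
      (r + 1).choose (i + 1) * (K + 1).descFactorial (K - r) := by
  have h := Nat.choose_mul (n := K + 1) (k := r + 1) (s := i + 1) (by omega)
  rw [show K + 1 - (i + 1) = K - i by omega, show r + 1 - (i + 1) = r - i by omega] at h
  rw [Nat.descFactorial_eq_factorial_mul_choose, Nat.descFactorial_eq_factorial_mul_choose,
    Nat.choose_symm_of_eq_add (by omega : K - i = K - r + (r - i)),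
    Nat.choose_symm_of_eq_add (by omega : K + 1 = K - r + (r + 1))]
  rw [mul_left_comm, ← h]; ring

def morinPoly (K : ℕ) (x : ℕ → ℝ) (s : ℝ) : ℝ :=
  s ^ (K + 1) + ∑ i ∈ Icc 1 (K - 1), x i * s ^ (K - i)

def morinCurveCoeff (K r : ℕ) : ℝ := (-1) ^ r * r * (K + 1).choose (r + 1)

theorem morinCurveCoeff_ne_zero {K r : ℕ} (h1 : 1 ≤ r) (hr : r ≤ K) : morinCurveCoeff K r ≠ 0 := by
  have : (K + 1).choose (r + 1) ≠ 0 := (Nat.choose_pos (by omega)).ne'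
  unfold morinCurveCoeff
  positivity

theorem morinCurveCoeff_one (K : ℕ) : morinCurveCoeff K 1 = -(K * (K + 1)) / 2 := by
  simp [morinCurveCoeff, Nat.cast_choose_two]
  ring

theorem descFactorial_add_sum_morinCurveCoeff_mul {K r : ℕ} (h1 : 1 ≤ r) (hr : r ≤ K) :
    ((K + 1).descFactorial (K - r) : ℝ) +
      ∑ i ∈ Icc 1 r, morinCurveCoeff K i * (K - i).descFactorial (K - r) = 0 := by
  have hterm : ∀ i ∈ Icc 1 r, morinCurveCoeff K i * (K - i).descFactorial (K - r) =
      (-1) ^ i * i * (r + 1).choose (i + 1) * ((K + 1).descFactorial (K - r) : ℝ) := by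
    intro i hi
    have := choose_mul_descFactorial_eq (mem_Icc.1 hi).2 hr
    unfold morinCurveCoeff
    rw [mul_assoc, ← Nat.cast_mul, this, Nat.cast_mul]
    ring
  have hsum : ∑ i ∈ Icc 1 r, (-1 : ℝ) ^ i * i * (r + 1).choose (i + 1) = -1 := by
    have hzero : ∀ i ∈ range (r + 1), i ∉ Icc 1 r →
        (-1 : ℝ) ^ i * i * (r + 1).choose (i + 1) = 0 := by
      intro i hi hi'
      obtain rfl : i = 0 := by simp only [mem_range, mem_Icc] at hi hi'; omega
      simp
    rw [sum_subset (fun i hi => mem_range.2 (by rw [mem_Icc] at hi; omega)) hzero]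
    exact_mod_cast sum_range_neg_one_pow_mul_mul_choose_succ (by omega : r ≠ 0)
  rw [sum_congr rfl hterm, ← sum_mul, hsum]
  ring

theorem iteratedDeriv_morinPoly (K : ℕ) (x : ℕ → ℝ) (j : ℕ) (t : ℝ) :
    iteratedDeriv j (morinPoly K x) t = (K + 1).descFactorial j * t ^ (K + 1 - j) +
      ∑ i ∈ Icc 1 (K - 1), x i * ((K - i).descFactorial j * t ^ (K - i - j)) := by
  unfold morinPoly
  rw [iteratedDeriv_fun_add (by fun_prop) (by fun_prop), iteratedDeriv_fun_sum (by fun_prop)]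
  simp [iteratedDeriv_const_mul_field]

theorem iteratedDeriv_morinPoly_eq_sum_sub_morinCurveCoeff (K : ℕ) (x : ℕ → ℝ) (t : ℝ) {r : ℕ}
    (h1 : 1 ≤ r) (hr : r ≤ K - 1) :
    iteratedDeriv (K - r) (morinPoly K x) t = ∑ i ∈ Icc 1 r,
      (x i - morinCurveCoeff K i * t ^ (i + 1)) * ((K - i).descFactorial (K - r) * t ^ (r - i)) := by
  have hvanish : ∀ i ∈ Icc 1 (K - 1), i ∉ Icc 1 r →
      x i * ((K - i).descFactorial (K - r) * t ^ (K - i - (K - r))) = 0 := by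
    intro i hi hir
    simp only [mem_Icc] at hi hir
    rw [Nat.descFactorial_eq_zero_iff_lt.2 (by omega)]
    simp
  have htrunc :
      ∑ i ∈ Icc 1 (K - 1), x i * ((K - i).descFactorial (K - r) * t ^ (K - i - (K - r))) =
      ∑ i ∈ Icc 1 r, x i * ((K - i).descFactorial (K - r) * t ^ (r - i)) := by
    rw [← sum_subset (Icc_subset_Icc_right hr) hvanish]
    refine sum_congr rfl fun i hi => ?_
    rw [show K - i - (K - r) = r - i by rw [mem_Icc] at hi; omega]
  have hpow : ∀ i ∈ Icc 1 r, t ^ (i + 1) * t ^ (r - i) = t ^ (r + 1) := fun i hi => by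
    rw [← pow_add, show i + 1 + (r - i) = r + 1 by rw [mem_Icc] at hi; omega]
  have hcurve := descFactorial_add_sum_morinCurveCoeff_mul h1 (hr.trans (Nat.sub_le K 1))
  rw [iteratedDeriv_morinPoly, htrunc, show K + 1 - (K - r) = r + 1 by omega]
  simp only [sub_mul, sum_sub_distrib]
  have hfactor : ∑ i ∈ Icc 1 r, morinCurveCoeff K i * t ^ (i + 1) *
      ((K - i).descFactorial (K - r) * t ^ (r - i)) =
      (∑ i ∈ Icc 1 r, morinCurveCoeff K i * (K - i).descFactorial (K - r)) * t ^ (r + 1) := by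
    rw [sum_mul]
    refine sum_congr rfl fun i hi => ?_
    rw [← hpow i hi]
    ring
  rw [hfactor]
  linear_combination t ^ (r + 1) * hcurve

theorem stmt2_general (K : ℕ) :
    ∃ c : ℕ → ℝ,
      (∀ r ∈ Finset.Icc 1 (K - 1), c r ≠ 0) ∧
      c 1 = -((K : ℝ) * ((K : ℝ) + 1)) / 2 ∧
      ∀ (x : ℕ → ℝ) (t : ℝ),
        (∀ j ∈ Finset.Icc 1 (K - 1),
            iteratedDeriv j
              (fun s : ℝ => s ^ (K + 1) + ∑ i ∈ Finset.Icc 1 (K - 1), x i * s ^ (K - i)) t = 0)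
          ↔ (∀ r ∈ Finset.Icc 1 (K - 1), x r = c r * t ^ (r + 1)) := by
  refine ⟨morinCurveCoeff K, fun r hr => morinCurveCoeff_ne_zero (mem_Icc.1 hr).1 (by
    rw [mem_Icc] at hr; omega), morinCurveCoeff_one K, fun x t => ?_⟩
  rw [forall_mem_Icc_one_sub_one_iff]
  refine forall_iff_forall_of_triangular fun r hr hlower => ?_
  rw [mem_Icc] at hr
  change iteratedDeriv (K - r) (morinPoly K x) t = 0 ↔ _
  rw [iteratedDeriv_morinPoly_eq_sum_sub_morinCurveCoeff K x t hr.1 hr.2,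
    sum_eq_single_of_mem r (mem_Icc.2 ⟨hr.1, le_rfl⟩) fun i hi hir => ?_]
  · simp [Nat.descFactorial_self, Nat.factorial_ne_zero, sub_eq_zero]
  · rw [mem_Icc] at hi
    rw [hlower i (lt_of_le_of_ne hi.2 hir) (mem_Icc.2 ⟨hi.1, by omega⟩), sub_self, zero_mul]

/-- For every `K ≥ 2` there exist nonzero constants `c_1, …, c_{K-1}`, with
`c 1 = -K(K+1)/2`, such that the system `∂^j γ/∂t^j (x,t) = 0` for `j = 1, …, K-1`
is equivalent to `x r = c r * t^(r+1)` for `r = 1, …, K-1`, where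
`γ(x,t) = t^(K+1) + ∑_{i=1}^{K-1} x i * t^(K-i)`. -/
theorem stmt2 (K : ℕ) (hK : 2 ≤ K) :
    ∃ c : ℕ → ℝ,
      (∀ r ∈ Finset.Icc 1 (K - 1), c r ≠ 0) ∧
      c 1 = -((K : ℝ) * ((K : ℝ) + 1)) / 2 ∧
      ∀ (x : ℕ → ℝ) (t : ℝ),
        (∀ j ∈ Finset.Icc 1 (K - 1),
            iteratedDeriv j
              (fun s : ℝ => s ^ (K + 1) + ∑ i ∈ Finset.Icc 1 (K - 1), x i * s ^ (K - i)) t = 0)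
          ↔ (∀ r ∈ Finset.Icc 1 (K - 1), x r = c r * t ^ (r + 1)) :=
  stmt2_general K
end

section
/- For every integer K ≥ 3 there exist nonzero real constants α_2,…,α_{K−1} and β_2,…,β_{K−1}, depending only on K, such that for all (x,t) ∈ ℝ^{K−1} × ℝ the following are equivalent: (a) ∂^jγ/∂t^j(x,t) = 0 for every j = 1,…,K−2; (b) x_r = α_r·t^{r+1} + β_r·x_1·t^{r−1} for every r = 2,…,K−1. (Thus near an A_K point the closure of the set A_{K−2} is the surface parametrized by the two free variables x_1 and t.) -/
/-!
Regard `γ(x, ·)` as a polynomial `γₓ`. For fixed `x₁` and `t` the polynomial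
`m = (X - t)^(K+1) + (K+1)t (X - t)^K + (x₁ + C(K+1,2) t²)(X - t)^(K-1)`
has the same coefficients as `γₓ` in degrees `K+1, K, K-1`, and its derivatives of orders
`1, …, K-2` vanish at `t`. So `d = γₓ - m` has degree at most `K-2`, and (a) says that `d` has
vanishing derivatives of orders `1, …, K-2` at `t`. By Taylor expansion at `t` this means `d` is
constant, i.e. every `x_r` (`2 ≤ r ≤ K-1`) is the `X^(K-r)`-coefficient of `m`, which the
binomial theorem computes as `α_r t^(r+1) + β_r x₁ t^(r-1)`.
-/

open Finset Polynomial Nat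

namespace Polynomial

theorem iteratedDeriv_eval {𝕜 : Type*} [NontriviallyNormedField 𝕜] (p : 𝕜[X]) (j : ℕ) :
    iteratedDeriv j (fun s => p.eval s) = fun s => (derivative^[j] p).eval s := by
  induction j generalizing p with
  | zero => rfl
  | succ j ih =>
    have hderiv : _root_.deriv (fun s => p.eval s) = fun s => p.derivative.eval s := by
      ext s; exact p.deriv
    rw [iteratedDeriv_succ', hderiv, ih, Function.iterate_succ_apply]

theorem iterate_derivative_eval_eq_factorial_mul_taylor_coeff {R : Type*} [CommSemiring R]
    (p : R[X]) (t : R) (j : ℕ) :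
    (derivative^[j] p).eval t = j ! * (taylor t p).coeff j := by
  rw [taylor_coeff, ← factorial_smul_hasseDeriv, LinearMap.smul_apply, eval_smul, nsmul_eq_mul]

theorem natDegree_eq_zero_iff_forall_coeff_eq_zero {R : Type*} [Semiring R] {q : R[X]} {n : ℕ}
    (hq : q.natDegree ≤ n) : q.natDegree = 0 ↔ ∀ k ∈ Icc 1 n, q.coeff k = 0 := by
  rw [← Nat.le_zero, natDegree_le_iff_coeff_eq_zero]
  refine ⟨fun h k hk => h k (mem_Icc.1 hk).1, fun h N hN => ?_⟩
  by_cases hNn : N ≤ n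
  · exact h N (mem_Icc.2 ⟨hN, hNn⟩)
  · exact coeff_eq_zero_of_natDegree_lt (by omega)

theorem forall_iterate_derivative_eval_eq_zero_iff {R : Type*} [CommRing R] [IsDomain R]
    [CharZero R] {q : R[X]} {n : ℕ} (hq : q.natDegree ≤ n) (t : R) :
    (∀ j ∈ Icc 1 n, (derivative^[j] q).eval t = 0) ↔ ∀ k ∈ Icc 1 n, q.coeff k = 0 := by
  rw [← natDegree_eq_zero_iff_forall_coeff_eq_zero hq, ← natDegree_taylor q t,
    natDegree_eq_zero_iff_forall_coeff_eq_zero ((natDegree_taylor q t).trans_le hq)]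
  simp [iterate_derivative_eval_eq_factorial_mul_taylor_coeff, Nat.factorial_ne_zero]

theorem coeff_X_sub_C_pow {R : Type*} [Ring R] (t : R) (n k : ℕ) :
    ((X - C t) ^ n).coeff k = (-t) ^ (n - k) * n.choose k := by
  rw [sub_eq_add_neg, ← C_neg, coeff_X_add_C_pow]

theorem iterate_derivative_X_sub_C_pow_eval_self {R : Type*} [CommRing R] (t : R) {n j : ℕ}
    (h : j < n) :
    (derivative^[j] ((X - C t) ^ n)).eval t = 0 := by
  simp [iterate_derivative_X_sub_pow, zero_pow (Nat.sub_ne_zero_of_lt h)]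

end Polynomial

namespace MorinASingularity

noncomputable def gammaPoly (K : ℕ) (x : ℕ → ℝ) : ℝ[X] :=
  X ^ (K + 1) + ∑ i ∈ Icc 1 (K - 1), C (x i) * X ^ (K - i)

noncomputable def contactPoly (K : ℕ) (u t : ℝ) : ℝ[X] :=
  (X - C t) ^ (K + 1) + C ((K + 1) * t) * (X - C t) ^ K
    + C (u + (K + 1).choose 2 * t ^ 2) * (X - C t) ^ (K - 1)

noncomputable def alpha (K r : ℕ) : ℝ :=
  (-1) ^ (r + 1) * ((K + 1).choose (r + 1) - (K + 1) * K.choose r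
    + (K + 1).choose 2 * (K - 1).choose (r - 1))

noncomputable def beta (K r : ℕ) : ℝ :=
  (-1) ^ (r + 1) * (K - 1).choose (r - 1)

variable {K r : ℕ}

theorem eval_gammaPoly (x : ℕ → ℝ) (s : ℝ) :
    (gammaPoly K x).eval s = s ^ (K + 1) + ∑ i ∈ Icc 1 (K - 1), x i * s ^ (K - i) := by
  simp [gammaPoly, eval_finsetSum]

theorem coeff_gammaPoly (x : ℕ → ℝ) (n : ℕ) :
    (gammaPoly K x).coeff n = (if n = K + 1 then 1 else 0)
      + ∑ i ∈ Icc 1 (K - 1), if n = K - i then x i else 0 := by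
  simp [gammaPoly, coeff_X_pow]

theorem coeff_gammaPoly_sub (x : ℕ → ℝ) (hr : r ∈ Icc 1 (K - 1)) :
    (gammaPoly K x).coeff (K - r) = x r := by
  rw [mem_Icc] at hr
  rw [coeff_gammaPoly, if_neg (by omega), zero_add, sum_eq_single r]
  · simp
  · intro i hi hir
    rw [mem_Icc] at hi
    exact if_neg (by omega)
  · simp [hr.1, hr.2]

theorem coeff_gammaPoly_of_le (x : ℕ → ℝ) {n : ℕ} (hn : K ≤ n) :
    (gammaPoly K x).coeff n = if n = K + 1 then 1 else 0 := by
  rw [coeff_gammaPoly, add_eq_left]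
  refine sum_eq_zero fun i hi => if_neg ?_
  rw [mem_Icc] at hi
  omega

theorem coeff_contactPoly (u t : ℝ) (n : ℕ) :
    (contactPoly K u t).coeff n = (-t) ^ (K + 1 - n) * (K + 1).choose n
      + (K + 1) * t * ((-t) ^ (K - n) * K.choose n)
      + (u + (K + 1).choose 2 * t ^ 2) * ((-t) ^ (K - 1 - n) * (K - 1).choose n) := by
  simp only [contactPoly, coeff_add, coeff_C_mul, coeff_X_sub_C_pow]

theorem coeff_contactPoly_of_le (hK : 1 ≤ K) (u t : ℝ) {n : ℕ} (hn : K ≤ n) :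
    (contactPoly K u t).coeff n = if n = K + 1 then 1 else 0 := by
  rw [coeff_contactPoly, Nat.choose_eq_zero_of_lt (show K - 1 < n by omega)]
  obtain rfl | rfl | hn := (by omega : n = K ∨ n = K + 1 ∨ K + 1 < n)
  · simp only [add_tsub_cancel_left, pow_one, choose_succ_self_right, cast_add, cast_one,
      tsub_self, pow_zero, choose_self, Nat.left_eq_add, one_ne_zero,
      ↓reduceIte]
    ring
  · simp
  · simp [Nat.choose_eq_zero_of_lt hn, Nat.choose_eq_zero_of_lt (show K < n by omega), hn.ne']

theorem coeff_contactPoly_pred (hK : 1 ≤ K) (u t : ℝ) :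
    (contactPoly K u t).coeff (K - 1) = u := by
  have hchoose : ((K + 1) * K : ℝ) = (K + 1).choose 2 * 2 := by
    exact_mod_cast K.choose_one_right ▸ Nat.add_one_mul_choose_eq K 1
  rw [coeff_contactPoly, Nat.choose_symm_of_eq_add (show K + 1 = K - 1 + 2 by omega),
    Nat.choose_symm_of_eq_add (show K = K - 1 + 1 by omega), show K + 1 - (K - 1) = 2 by omega,
    show K - (K - 1) = 1 by omega]
  simp only [even_two, Even.neg_pow, pow_one, choose_one_right, tsub_self, pow_zero, choose_self,
    cast_one, mul_one]
  linear_combination (-t ^ 2) * hchoose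

theorem coeff_contactPoly_sub (u t : ℝ) (hr : r ∈ Icc 2 (K - 1)) :
    (contactPoly K u t).coeff (K - r)
      = alpha K r * t ^ (r + 1) + beta K r * u * t ^ (r - 1) := by
  rw [mem_Icc] at hr
  rw [coeff_contactPoly, Nat.choose_symm_of_eq_add (show K + 1 = K - r + (r + 1) by omega),
    Nat.choose_symm_of_eq_add (show K = K - r + r by omega),
    Nat.choose_symm_of_eq_add (show K - 1 = K - r + (r - 1) by omega),
    show K + 1 - (K - r) = r + 1 by omega, show K - (K - r) = r by omega,
    show K - 1 - (K - r) = r - 1 by omega]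
  obtain ⟨s, rfl⟩ : ∃ s, r = s + 2 := ⟨r - 2, by omega⟩
  simp only [alpha, beta, show s + 2 - 1 = s + 1 by omega]
  ring

theorem iterate_derivative_contactPoly_eval_self (u t : ℝ) {j : ℕ} (hj : j < K - 1) :
    (derivative^[j] (contactPoly K u t)).eval t = 0 := by
  simp only [contactPoly, iterate_map_add, iterate_derivative_C_mul, eval_add, eval_mul,
    iterate_derivative_X_sub_C_pow_eval_self t (show j < K + 1 by omega),
    iterate_derivative_X_sub_C_pow_eval_self t (show j < K by omega),
    iterate_derivative_X_sub_C_pow_eval_self t hj, mul_zero, add_zero]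

theorem natDegree_gammaPoly_sub_contactPoly_le (hK : 2 ≤ K) (x : ℕ → ℝ) (t : ℝ) :
    (gammaPoly K x - contactPoly K (x 1) t).natDegree ≤ K - 2 := by
  refine natDegree_le_iff_coeff_eq_zero.2 fun N hN => ?_
  rw [coeff_sub, sub_eq_zero]
  obtain rfl | hKN := (by omega : N = K - 1 ∨ K ≤ N)
  · rw [coeff_gammaPoly_sub x (mem_Icc.2 ⟨le_rfl, by omega⟩),
      coeff_contactPoly_pred (by omega)]
  · rw [coeff_gammaPoly_of_le x hKN, coeff_contactPoly_of_le (by omega) _ _ hKN]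

theorem coeff_gammaPoly_sub_contactPoly_eq_zero_iff (x : ℕ → ℝ) (t : ℝ) :
    (∀ k ∈ Icc 1 (K - 2), (gammaPoly K x - contactPoly K (x 1) t).coeff k = 0) ↔
      ∀ r ∈ Icc 2 (K - 1), x r = alpha K r * t ^ (r + 1) + beta K r * x 1 * t ^ (r - 1) := by
  have hcoeff : ∀ r ∈ Icc 2 (K - 1), (gammaPoly K x - contactPoly K (x 1) t).coeff (K - r) =
      x r - (alpha K r * t ^ (r + 1) + beta K r * x 1 * t ^ (r - 1)) := fun r hr => by
    rw [coeff_sub, coeff_gammaPoly_sub x (Icc_subset_Icc_left one_le_two hr),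
      coeff_contactPoly_sub _ _ hr]
  constructor
  · intro h r hr
    rw [← sub_eq_zero, ← hcoeff r hr]
    exact h _ (by simp only [mem_Icc] at hr ⊢; omega)
  · intro h k hk
    rw [mem_Icc] at hk
    have hr : K - k ∈ Icc 2 (K - 1) := mem_Icc.2 ⟨by omega, by omega⟩
    rw [show k = K - (K - k) by omega, hcoeff _ hr, h _ hr, sub_self]

theorem alpha_ne_zero (hr : r ∈ Icc 2 (K - 1)) : alpha K r ≠ 0 := by
  rw [mem_Icc] at hr
  obtain ⟨k, rfl⟩ : ∃ k, K = k + 1 := ⟨K - 1, by omega⟩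
  obtain ⟨s, rfl⟩ : ∃ s, r = s + 1 := ⟨r - 1, by omega⟩
  simp only [alpha, Nat.add_sub_cancel] at hr ⊢
  push_cast
  have h₁ : ((k + 1) * k.choose s : ℝ) = (k + 1).choose (s + 1) * (s + 1) := by
    exact_mod_cast Nat.add_one_mul_choose_eq k s
  have h₂ : ((k + 1 + 1) * (k + 1).choose (s + 1) : ℝ)
      = (k + 1 + 1).choose (s + 1 + 1) * (s + 1 + 1) := by
    exact_mod_cast Nat.add_one_mul_choose_eq (k + 1) (s + 1)
  have h₃ : ((k + 1 + 1) * (k + 1) : ℝ) = (k + 1 + 1).choose 2 * 2 := by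
    exact_mod_cast (k + 1).choose_one_right ▸ Nat.add_one_mul_choose_eq (k + 1) 1
  have hc : (0 : ℝ) < k.choose s := by exact_mod_cast Nat.choose_pos (by omega)
  have hs : (0 : ℝ) < s := by exact_mod_cast (by omega : 0 < s)
  have key : 2 * (s + 1) * (s + 2) * ((k + 1 + 1).choose (s + 1 + 1)
      - (k + 1 + 1) * (k + 1).choose (s + 1) + (k + 1 + 1).choose 2 * k.choose s : ℝ)
      = (k + 2) * (k + 1) * k.choose s * (s + 1) * s := by
    linear_combination (-2 * (s + 1) : ℝ) * h₂ + 2 * (s + 1) * (k + 2) * h₁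
      - (s + 1) * (s + 2) * k.choose s * h₃
  refine mul_ne_zero (pow_ne_zero _ (by norm_num)) fun hE => ?_
  rw [hE, mul_zero] at key
  have : (0 : ℝ) < (k + 2) * (k + 1) * k.choose s * (s + 1) * s :=
    mul_pos (mul_pos (mul_pos (by positivity) hc) (by positivity)) hs
  linarith

theorem beta_ne_zero (hr : r ∈ Icc 2 (K - 1)) : beta K r ≠ 0 := by
  rw [mem_Icc] at hr
  exact mul_ne_zero (pow_ne_zero _ (by norm_num))
    (by exact_mod_cast (Nat.choose_pos (by omega)).ne')

end MorinASingularity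

/-- For every `K ≥ 3` there exist nonzero constants `α_2, …, α_{K-1}` and
`β_2, …, β_{K-1}` such that the system `∂^j γ/∂t^j (x,t) = 0` for `j = 1, …, K-2`
is equivalent to `x r = α r * t^(r+1) + β r * x 1 * t^(r-1)` for `r = 2, …, K-1`,
where `γ(x,t) = t^(K+1) + ∑_{i=1}^{K-1} x i * t^(K-i)`. -/
theorem stmt4 (K : ℕ) (hK : 3 ≤ K) :
    ∃ α β : ℕ → ℝ,
      (∀ r ∈ Finset.Icc 2 (K - 1), α r ≠ 0 ∧ β r ≠ 0) ∧
      ∀ (x : ℕ → ℝ) (t : ℝ),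
        (∀ j ∈ Finset.Icc 1 (K - 2),
            iteratedDeriv j
              (fun s : ℝ => s ^ (K + 1) + ∑ i ∈ Finset.Icc 1 (K - 1), x i * s ^ (K - i)) t = 0)
          ↔ (∀ r ∈ Finset.Icc 2 (K - 1),
              x r = α r * t ^ (r + 1) + β r * x 1 * t ^ (r - 1)) := by
  refine ⟨MorinASingularity.alpha K, MorinASingularity.beta K,
    fun r hr => ⟨MorinASingularity.alpha_ne_zero hr, MorinASingularity.beta_ne_zero hr⟩,
    fun x t => ?_⟩
  have hd := MorinASingularity.natDegree_gammaPoly_sub_contactPoly_le (by omega : 2 ≤ K) x t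
  rw [← MorinASingularity.coeff_gammaPoly_sub_contactPoly_eq_zero_iff,
    ← forall_iterate_derivative_eval_eq_zero_iff hd t]
  refine forall₂_congr fun j hj => ?_
  rw [mem_Icc] at hj
  simp only [← MorinASingularity.eval_gammaPoly, iteratedDeriv_eval, iterate_derivative_sub,
    eval_sub, sub_zero,
    MorinASingularity.iterate_derivative_contactPoly_eval_self _ _ (by omega : j < K - 1)]
end

section
/- Let d ≥ 2, let U ⊆ ℝ^d be an open neighborhood of 0, and let F : U → ℝ be a C^∞ function with ∇F(0) = 0. Write H = Hess F(0) for the Hessian matrix of F at 0 and M for its top-left (d−1)×(d−1) submatrix (the Hessian at 0 of the restriction of F to the hyperplane {x_d = 0}). Assume det H ≠ 0 and det M ≠ 0. Then there exist ε_0 > 0 and an open neighborhood V ⊆ U of 0 such that for every ε with 0 < ε < ε_0 there is a unique point p̃(ε) ∈ V with ∇F(p̃(ε)) = −ε·e_d, and the last coordinate of p̃(ε) is nonzero, with sign(p̃(ε)_d) = −sign(det M)·sign(det H). -/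
/-!
Near `0` the gradient map `G = ∇F` has invertible differential `Hᵀ`, so by the inverse function
theorem it has a local inverse `ψ`, and `p̃(ε) = ψ(-ε e_d)` is the unique solution near `0`.
The last coordinate of `p̃` vanishes at `ε = 0` and has derivative `-(H⁻¹)_{dd} = -det M / det H`
there (Cramer's rule), which is nonzero; hence for small `ε > 0` it has the sign of that derivative.
-/

open Filter Topology Set

theorem Real.sign_mul (a b : ℝ) : Real.sign (a * b) = Real.sign a * Real.sign b := by
  rcases lt_trichotomy a 0 with ha | rfl | ha <;> rcases lt_trichotomy b 0 with hb | rfl | hb <;>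
    simp [Real.sign_of_neg, Real.sign_of_pos, mul_pos_of_neg_of_neg, mul_neg_of_neg_of_pos,
      mul_neg_of_pos_of_neg, *]

theorem HasDerivAt.eventually_sign_eq_of_eq_zero {h : ℝ → ℝ} {a c : ℝ} (hd : HasDerivAt h c a)
    (ha : h a = 0) (hc : c ≠ 0) : ∀ᶠ x in 𝓝[>] a, Real.sign (h x) = Real.sign c := by
  have hslope := (hasDerivAt_iff_tendsto_slope.mp hd).mono_left (nhdsGT_le_nhdsNE a)
  have hval : ∀ x, a < x → h x = slope h a x * (x - a) := fun x hx => by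
    rw [slope_def_field, ha, sub_zero, div_mul_cancel₀ _ (sub_ne_zero.2 hx.ne')]
  rcases hc.lt_or_gt with hc | hc
  · filter_upwards [hslope.eventually (eventually_lt_nhds hc), self_mem_nhdsWithin]
      with x hs (hx : a < x)
    rw [Real.sign_of_neg hc, Real.sign_of_neg (hval x hx ▸ mul_neg_of_neg_of_pos hs (sub_pos.2 hx))]
  · filter_upwards [hslope.eventually (eventually_gt_nhds hc), self_mem_nhdsWithin]
      with x hs (hx : a < x)
    rw [Real.sign_of_pos hc, Real.sign_of_pos (hval x hx ▸ mul_pos hs (sub_pos.2 hx))]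

-- No invertibility is needed: for singular `A` both sides are `0` (`0⁻¹ = 0` in `Matrix.inv`).
theorem Matrix.inv_apply_last_last {K : Type*} [Field K] {n : ℕ}
    (A : Matrix (Fin (n + 1)) (Fin (n + 1)) K) :
    A⁻¹ (Fin.last n) (Fin.last n) = (A.submatrix Fin.castSucc Fin.castSucc).det / A.det := by
  rw [Matrix.inv_def, Matrix.smul_apply, Matrix.adjugate_fin_succ_eq_det_submatrix,
    Fin.succAbove_last, Ring.inverse_eq_inv, smul_eq_mul, div_eq_inv_mul]
  simp [← two_mul, pow_mul]

section InverseFunction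

variable {E F : Type*} [NormedAddCommGroup E] [CompleteSpace E] [NormedAddCommGroup F]

theorem HasStrictFDerivAt.exists_injOn_rightInverse {𝕜 : Type*} [NontriviallyNormedField 𝕜]
    [NormedSpace 𝕜 E] [NormedSpace 𝕜 F] {G : E → F} {A : E ≃L[𝕜] F} {a : E}
    (hG : HasStrictFDerivAt G (A : E →L[𝕜] F) a) {U : Set E} (hU : IsOpen U) (ha : a ∈ U) :
    ∃ V ⊆ U, IsOpen V ∧ a ∈ V ∧ InjOn G V ∧ ∃ ψ : F → E, ψ (G a) = a ∧
      HasFDerivAt ψ (A.symm : F →L[𝕜] E) (G a) ∧ ∀ᶠ y in 𝓝 (G a), ψ y ∈ V ∧ G (ψ y) = y := by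
  let φ := hG.toOpenPartialHomeomorph G
  have haV : a ∈ U ∩ φ.source := ⟨ha, hG.mem_toOpenPartialHomeomorph_source⟩
  refine ⟨U ∩ φ.source, inter_subset_left, hU.inter φ.open_source, haV,
    φ.injOn.mono inter_subset_right, hG.localInverse G A a, hG.localInverse_apply_image,
    hG.to_localInverse.hasFDerivAt, ?_⟩
  have hψ := hG.localInverse_continuousAt
  rw [ContinuousAt, hG.localInverse_apply_image] at hψ
  exact (hψ.eventually ((hU.inter φ.open_source).mem_nhds haV)).and hG.eventually_right_inverse

theorem HasStrictFDerivAt.exists_unique_preimage_ray_sign_eq [NormedSpace ℝ E] [NormedSpace ℝ F]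
    {G : E → F} {A : E ≃L[ℝ] F} {a : E}
    (hG : HasStrictFDerivAt G (A : E →L[ℝ] F) a) {U : Set E} (hU : IsOpen U) (ha : a ∈ U)
    (v : F) (ℓ : E →L[ℝ] ℝ) (hℓa : ℓ a = 0) (hℓv : ℓ (A.symm v) ≠ 0) :
    ∃ ε₀ > (0 : ℝ), ∃ V ⊆ U, IsOpen V ∧ a ∈ V ∧ ∀ ε, 0 < ε → ε < ε₀ →
      ∃ p ∈ V, G p = G a + ε • v ∧ (∀ q ∈ V, G q = G a + ε • v → q = p) ∧
        Real.sign (ℓ p) = Real.sign (ℓ (A.symm v)) := by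
  obtain ⟨V, hVU, hV, haV, hinj, ψ, hψa, hψ, hψV⟩ := hG.exists_injOn_rightInverse hU ha
  let γ : ℝ → F := fun ε => G a + ε • v
  have hγ : HasDerivAt γ v 0 := by
    simpa [γ] using ((hasDerivAt_id (0 : ℝ)).smul_const v).const_add (G a)
  have hγ0 : γ 0 = G a := by simp [γ]
  have hℓψγ : HasDerivAt (fun ε => ℓ (ψ (γ ε))) (ℓ (A.symm v)) 0 :=
    ℓ.hasFDerivAt.comp_hasDerivAt 0 (hψ.comp_hasDerivAt_of_eq 0 hγ hγ0.symm)
  have hnear : ∀ᶠ ε in 𝓝 (0 : ℝ), ψ (γ ε) ∈ V ∧ G (ψ (γ ε)) = γ ε :=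
    (hγ0 ▸ hγ.continuousAt.tendsto).eventually hψV
  obtain ⟨ε₀, hε₀, hIoo⟩ := mem_nhdsGT_iff_exists_Ioo_subset.1 <|
    (hnear.filter_mono nhdsWithin_le_nhds).and
      (hℓψγ.eventually_sign_eq_of_eq_zero (by simp [hγ0, hψa, hℓa]) hℓv)
  refine ⟨ε₀, hε₀, V, hVU, hV, haV, fun ε hε hεε₀ => ?_⟩
  obtain ⟨⟨hpV, hp⟩, hsign⟩ := hIoo ⟨hε, hεε₀⟩
  exact ⟨ψ (γ ε), hpV, hp, fun q hqV hq => hinj hqV hpV (hq.trans hp.symm), hsign⟩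

end InverseFunction

section PartialDerivs

variable {ι : Type*} [DecidableEq ι]

noncomputable def partialDerivs (F : (ι → ℝ) → ℝ) (y : ι → ℝ) : ι → ℝ :=
  fun j => fderiv ℝ F y (Pi.single j 1)

noncomputable def hessianMatrix (F : (ι → ℝ) → ℝ) (x : ι → ℝ) : Matrix ι ι ℝ :=
  Matrix.of fun i j => fderiv ℝ (fun y => partialDerivs F y j) x (Pi.single i 1)

theorem partialDerivs_eq_single_iff {F : (ι → ℝ) → ℝ} {y : ι → ℝ} {k : ι} {c : ℝ} :
    (∀ j, fderiv ℝ F y (Pi.single j 1) = if j = k then c else 0) ↔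
      partialDerivs F y = Pi.single k c := by
  simp only [funext_iff, partialDerivs, Pi.single_apply]

theorem hasStrictFDerivAt_partialDerivs [Fintype ι] {F : (ι → ℝ) → ℝ} {x : ι → ℝ}
    (hF : ContDiffAt ℝ 2 F x) :
    HasStrictFDerivAt (partialDerivs F)
      (Matrix.toLin' (hessianMatrix F x).transpose).toContinuousLinearMap x := by
  have hcomp : ∀ j, ContDiffAt ℝ 1 (fun y => partialDerivs F y j) x := fun j =>
    (hF.fderiv_right (m := 1) (by norm_num)).clm_apply contDiffAt_const
  have hstrict := (contDiffAt_pi.2 hcomp).hasStrictFDerivAt one_ne_zero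
  suffices (Matrix.toLin' (hessianMatrix F x).transpose).toContinuousLinearMap =
      fderiv ℝ (partialDerivs F) x by rwa [this]
  apply ContinuousLinearMap.coe_injective
  refine (Pi.basisFun ℝ ι).ext fun i => funext fun j => ?_
  rw [fderiv_pi fun j => (hcomp j).differentiableAt one_ne_zero]
  simp [hessianMatrix, Matrix.mulVec_single]

theorem ContDiffAt.exists_hasStrictFDerivAt_partialDerivs [Fintype ι] {F : (ι → ℝ) → ℝ}
    {x : ι → ℝ}
    (hF : ContDiffAt ℝ 2 F x) (hdet : (hessianMatrix F x).det ≠ 0) :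
    ∃ A : (ι → ℝ) ≃L[ℝ] (ι → ℝ), HasStrictFDerivAt (partialDerivs F) (A : (ι → ℝ) →L[ℝ] _) x ∧
      ∀ v, A.symm v = (hessianMatrix F x)⁻¹.transpose.mulVec v := by
  let _ : Invertible (hessianMatrix F x).transpose :=
    Matrix.invertibleOfIsUnitDet _ (by simpa using hdet.isUnit)
  refine ⟨((hessianMatrix F x).transpose.toLinearEquiv' ‹_›).toContinuousLinearEquiv,
    hasStrictFDerivAt_partialDerivs hF, fun v => ?_⟩
  rw [Matrix.transpose_nonsing_inv, ← Matrix.invOf_eq_nonsing_inv]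
  rfl

end PartialDerivs

/-- Let `F` be smooth on an open neighborhood `U` of `0` in `ℝ^d` (`d = n+2 ≥ 2`),
with `∇F(0) = 0`. Let `H` be the Hessian matrix of `F` at `0` and `M` its top-left
`(d-1)×(d-1)` submatrix (the Hessian at `0` of the restriction of `F` to `{x_d = 0}`).
If `det H ≠ 0` and `det M ≠ 0`, then there are `ε₀ > 0` and an open neighborhood
`V ⊆ U` of `0` such that for every `0 < ε < ε₀` there is a unique `p ∈ V` with
`∇F(p) = -ε·e_d`, and its last coordinate is nonzero with
`sign(p_d) = -sign(det M)·sign(det H)`. -/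
theorem stmt11 (n : ℕ) (U : Set (Fin (n + 2) → ℝ)) (hU : IsOpen U)
    (h0 : (0 : Fin (n + 2) → ℝ) ∈ U)
    (F : (Fin (n + 2) → ℝ) → ℝ) (hF : ContDiffOn ℝ (⊤ : ℕ∞) F U)
    (hcrit : fderiv ℝ F 0 = 0)
    (H : Matrix (Fin (n + 2)) (Fin (n + 2)) ℝ)
    (hH : ∀ i j, H i j = fderiv ℝ (fun y => fderiv ℝ F y (Pi.single j 1)) 0 (Pi.single i 1))
    (M : Matrix (Fin (n + 1)) (Fin (n + 1)) ℝ)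
    (hM : ∀ i j : Fin (n + 1), M i j = H i.castSucc j.castSucc)
    (hHdet : H.det ≠ 0) (hMdet : M.det ≠ 0) :
    ∃ ε₀ > (0 : ℝ), ∃ V : Set (Fin (n + 2) → ℝ),
      IsOpen V ∧ (0 : Fin (n + 2) → ℝ) ∈ V ∧ V ⊆ U ∧
      ∀ ε : ℝ, 0 < ε → ε < ε₀ →
        ∃ p, (p ∈ V ∧
            ∀ j, fderiv ℝ F p (Pi.single j 1) = if j = Fin.last (n + 1) then -ε else 0) ∧
          (∀ q, q ∈ V →
            (∀ j, fderiv ℝ F q (Pi.single j 1) = if j = Fin.last (n + 1) then -ε else 0) →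
            q = p) ∧
          p (Fin.last (n + 1)) ≠ 0 ∧
          Real.sign (p (Fin.last (n + 1))) = -(Real.sign M.det * Real.sign H.det) := by
  set d := Fin.last (n + 1)
  have hHess : H = hessianMatrix F 0 := Matrix.ext hH
  have hMsub : M = H.submatrix Fin.castSucc Fin.castSucc := Matrix.ext hM
  have hF2 : ContDiffAt ℝ 2 F 0 :=
    (hF.contDiffAt (hU.mem_nhds h0)).of_le (WithTop.coe_le_coe.2 le_top)
  obtain ⟨A, hG, hA⟩ := hF2.exists_hasStrictFDerivAt_partialDerivs (hHess ▸ hHdet)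
  have hc : A.symm (-Pi.single d 1) d = -(M.det / H.det) := by
    simp [hA, ← hHess, Matrix.mulVec_neg, Matrix.mulVec_single, Matrix.inv_apply_last_last, hMsub,
      d]
  have hc0 : -(M.det / H.det) ≠ 0 := neg_ne_zero.2 (div_ne_zero hMdet hHdet)
  obtain ⟨ε₀, hε₀, V, hVU, hV, h0V, hray⟩ := hG.exists_unique_preimage_ray_sign_eq hU h0
    (-Pi.single d 1) (ContinuousLinearMap.proj d) rfl
    (by rwa [ContinuousLinearMap.proj_apply, hc])
  refine ⟨ε₀, hε₀, V, hV, h0V, hVU, fun ε hε hεε₀ => ?_⟩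
  obtain ⟨p, hpV, hp, huniq, hsign⟩ := hray ε hε hεε₀
  have hG0 : partialDerivs F 0 = 0 := funext fun j => by simp [partialDerivs, hcrit]
  have htarget : partialDerivs F 0 + ε • -Pi.single d 1 = Pi.single d (-ε) := by
    simp [hG0, ← Pi.single_smul, Pi.single_neg]
  simp only [ContinuousLinearMap.proj_apply, hc] at hsign
  simp only [partialDerivs_eq_single_iff, ← htarget]
  refine ⟨p, ⟨hpV, hp⟩, huniq, fun hpd => hc0 ?_, ?_⟩
  · rwa [hpd, Real.sign_zero, eq_comm, Real.sign_eq_zero_iff] at hsign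
  · rw [hsign, Real.sign_neg, div_eq_mul_inv, Real.sign_mul, Real.sign_inv]
end
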